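/- Let E : M_a → M_b and F : M_b → M_c be linear maps and ρ ∈ M_a. For σ ∈ M_a ⊗ M_b define F ⊛ σ := ½{σ ⊗ 1_c, 1_a ⊗ D[F]} ∈ M_a ⊗ M_b ⊗ M_c. Then Tr_B[F ⊛ (E ⋆ ρ)] = ½{ρ ⊗ 1_c, D[F∘E]} = (F∘E) ⋆ ρ, where Tr_B denotes the partial trace over the middle tensor factor M_b and E ⋆ ρ = ½{ρ⊗1_b, D[E]}. That is, the Fullwood–Parzygnat state over time function satisfies the compositionality axiom (P). -/

import Mathlib

open Matrix Kronecker BigOperators ComplexOrder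

/-- `Mat n` is the algebra `M_n(ℂ)` of `n × n` complex matrices. -/
abbrev Mat (n : ℕ) : Type := Matrix (Fin n) (Fin n) ℂ

/-- The adjoint of a (linear) map `L : M_n → M_n` with respect to the
Hilbert–Schmidt inner product `⟨X, Y⟩ = Tr(Xᴴ * Y)`. -/
noncomputable def hsAdj {n : ℕ} (L : Mat n → Mat n) : Mat n → Mat n :=
  fun Y => Matrix.of fun i j => Matrix.trace ((L (Matrix.single i j (1 : ℂ)))ᴴ * Y)

/-- The swap operator `F = Σ_{i,j} E_{ij} ⊗ E_{ji} ∈ M_n ⊗ M_n`. -/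
noncomputable def swapOp (n : ℕ) : Matrix (Fin n × Fin n) (Fin n × Fin n) ℂ :=
  Matrix.of fun p q => if p.1 = q.2 ∧ p.2 = q.1 then (1 : ℂ) else 0

/-- `(id ⊗ E)(X)`: apply `E : M_a → M_b` to the second tensor factor. -/
noncomputable def idT {α : Type} {a b : ℕ} (E : Mat a → Mat b)
    (X : Matrix (α × Fin a) (α × Fin a) ℂ) : Matrix (α × Fin b) (α × Fin b) ℂ :=
  Matrix.of fun p q => E (Matrix.of fun x y => X (p.1, x) (q.1, y)) p.2 q.2

/-- `(L ⊗ id)(X)`: apply `L : M_a → M_b` to the first tensor factor. -/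
noncomputable def tId {α : Type} {a b : ℕ} (L : Mat a → Mat b)
    (X : Matrix (Fin a × α) (Fin a × α) ℂ) : Matrix (Fin b × α) (Fin b × α) ℂ :=
  Matrix.of fun p q => L (Matrix.of fun x y => X (x, p.2) (y, q.2)) p.1 q.1

/-- The Jamiołkowski channel state `D[E] := (id ⊗ E)(F)`. -/
noncomputable def chanState {a b : ℕ} (E : Mat a → Mat b) :
    Matrix (Fin a × Fin b) (Fin a × Fin b) ℂ := idT E (swapOp a)

/-- Partial trace over the second tensor factor. -/
noncomputable def ptraceR {α β : Type} [Fintype β] (X : Matrix (α × β) (α × β) ℂ) :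
    Matrix α α ℂ := Matrix.of fun i k => ∑ j, X (i, j) (k, j)

/-- Partial trace over the first tensor factor. -/
noncomputable def ptraceL {α β : Type} [Fintype α] (X : Matrix (α × β) (α × β) ℂ) :
    Matrix β β ℂ := Matrix.of fun j l => ∑ i, X (i, j) (i, l)

/-- The Fullwood–Parzygnat state over time function `E ⋆ ρ := ½{ρ ⊗ 1, D[E]}`. -/
noncomputable def FP {a b : ℕ} (E : Mat a → Mat b) (ρ : Mat a) :
    Matrix (Fin a × Fin b) (Fin a × Fin b) ℂ :=
  (1/2 : ℂ) • ((ρ ⊗ₖ (1 : Mat b)) * chanState E + chanState E * (ρ ⊗ₖ (1 : Mat b)))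

/-- An orthogonal projection: `P = P† = P²`. -/
def IsOrthProj {n : ℕ} (P : Mat n) : Prop := P.IsHermitian ∧ P * P = P

/-- `1_a ⊗ X` for `X ∈ M_b ⊗ M_c`, as a matrix on `(ℂᵃ ⊗ ℂᵇ) ⊗ ℂᶜ`. -/
noncomputable def oneTensorBC (a b c : ℕ) (X : Matrix (Fin b × Fin c) (Fin b × Fin c) ℂ) :
    Matrix ((Fin a × Fin b) × Fin c) ((Fin a × Fin b) × Fin c) ℂ :=
  Matrix.of fun p q =>
    (if p.1.1 = q.1.1 then (1 : ℂ) else 0) * X (p.1.2, p.2) (q.1.2, q.2)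

/-- `F ⊛ σ := ½{σ ⊗ 1_c, 1_a ⊗ D[F]}` for `σ ∈ M_a ⊗ M_b`. -/
noncomputable def boxt (a b c : ℕ) (Fc : Mat b → Mat c)
    (σ : Matrix (Fin a × Fin b) (Fin a × Fin b) ℂ) :
    Matrix ((Fin a × Fin b) × Fin c) ((Fin a × Fin b) × Fin c) ℂ :=
  (1/2 : ℂ) • ((σ ⊗ₖ (1 : Mat c)) * oneTensorBC a b c (chanState Fc) +
    oneTensorBC a b c (chanState Fc) * (σ ⊗ₖ (1 : Mat c)))

/-- Partial trace over the middle factor of `M_a ⊗ M_b ⊗ M_c`. -/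
noncomputable def ptraceMid (a b c : ℕ)
    (X : Matrix ((Fin a × Fin b) × Fin c) ((Fin a × Fin b) × Fin c) ℂ) :
    Matrix (Fin a × Fin c) (Fin a × Fin c) ℂ :=
  Matrix.of fun p q => ∑ j : Fin b, X ((p.1, j), p.2) ((q.1, j), q.2)

lemma chanState_apply {a b : ℕ} (E : Mat a → Mat b) (i j : Fin a) (x y : Fin b) :
    chanState E (i, x) (j, y) = E (single j i 1) x y := by
  simp only [chanState, idT, Matrix.of_apply]
  congr 2
  ext x' y'
  simp [swapOp, single, and_comm, eq_comm]

lemma sum_lin {n m : ℕ} {F : Mat n → Mat m} (hF : IsLinearMap ℂ F) (M : Mat n) (u v : Fin m) :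
    ∑ x, ∑ z, M x z * F (single x z (1 : ℂ)) u v = F M u v := by
  have hFs : F = fun X => hF.mk' F X := rfl
  conv_rhs => rw [matrix_eq_sum_single M, hFs]
  simp only []
  rw [map_sum (hF.mk' F), Matrix.sum_apply]
  refine Finset.sum_congr rfl fun x _ => ?_
  rw [map_sum (hF.mk' F), Matrix.sum_apply]
  refine Finset.sum_congr rfl fun z _ => ?_
  have h2 : single x z (M x z) = M x z • single x z (1:ℂ) := by
    rw [smul_single, smul_eq_mul, mul_one]
  rw [h2, _root_.map_smul]
  simp [Matrix.smul_apply, smul_eq_mul]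

lemma key (a b c : ℕ) (Fc : Mat b → Mat c)
    (σ : Matrix (Fin a × Fin b) (Fin a × Fin b) ℂ) (i j : Fin a) (u v : Fin c) :
    ptraceMid a b c (boxt a b c Fc σ) (i, u) (j, v)
      = ∑ x, ∑ z, σ (i, x) (j, z) * Fc (single x z 1) u v := by
  simp only [ptraceMid, boxt, Matrix.of_apply, Matrix.add_apply, Matrix.smul_apply,
    Matrix.mul_apply, kroneckerMap_apply, Matrix.one_apply, oneTensorBC, chanState_apply,
    Fintype.sum_prod_type, smul_eq_mul]
  simp only [ite_mul, mul_ite, one_mul, zero_mul, mul_zero, mul_one,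
    Finset.sum_ite_eq, Finset.sum_ite_eq', Finset.mem_univ, if_true]
  simp [Finset.sum_ite_eq, Finset.sum_ite_eq']
  rw [← Finset.mul_sum, Finset.sum_add_distrib]
  have h2 : ∑ x : Fin b, ∑ x1 : Fin b, Fc (single x1 x 1) u v * σ (i, x1) (j, x)
      = ∑ x : Fin b, ∑ z : Fin b, σ (i, x) (j, z) * Fc (single x z 1) u v := by
    rw [Finset.sum_comm]
    simp [mul_comm]
  rw [h2]
  ring

lemma FP_apply {a b : ℕ} (E : Mat a → Mat b) (ρ : Mat a) (i j : Fin a) (x z : Fin b) :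
    FP E ρ (i, x) (j, z) = (1/2 : ℂ) *
      ((∑ k, ρ i k * E (single j k 1) x z) +
       (∑ k, E (single k i 1) x z * ρ k j)) := by
  simp only [FP, Matrix.smul_apply, Matrix.add_apply, Matrix.mul_apply, kroneckerMap_apply,
    Matrix.one_apply, chanState_apply, Fintype.sum_prod_type, smul_eq_mul]
  simp [Finset.sum_ite_eq, Finset.sum_ite_eq', ite_mul, mul_ite]

/-- the Fullwood–Parzygnat state over time function satisfies the
compositionality axiom (P): `Tr_B[F ⊛ (E ⋆ ρ)] = (F∘E) ⋆ ρ`. -/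
theorem stmt_12 (a b c : ℕ) (E : Mat a → Mat b) (hE : IsLinearMap ℂ E)
    (Fc : Mat b → Mat c) (hF : IsLinearMap ℂ Fc) (ρ : Mat a) :
    ptraceMid a b c (boxt a b c Fc (FP E ρ)) = FP (fun X => Fc (E X)) ρ := by
  apply Matrix.ext
  rintro ⟨i, u⟩ ⟨j, v⟩
  rw [key]
  simp only [FP_apply]
  have swap3 : ∀ f : Fin b → Fin b → Fin a → ℂ,
      ∑ x, ∑ z, ∑ k, f x z k = ∑ k, ∑ x, ∑ z, f x z k := by
    intro f
    have h1 : ∀ x : Fin b, ∑ z : Fin b, ∑ k : Fin a, f x z k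
        = ∑ k : Fin a, ∑ z : Fin b, f x z k := fun x => Finset.sum_comm
    simp only [h1]
    exact Finset.sum_comm
  have expand : ∀ x z : Fin b, (1/2 : ℂ) *
        ((∑ k, ρ i k * E (single j k 1) x z) +
         (∑ k, E (single k i 1) x z * ρ k j)) * Fc (single x z 1) u v
      = (∑ k, (1/2 : ℂ) *
          (ρ i k * E (single j k 1) x z * Fc (single x z 1) u v))
        + ∑ k, (1/2 : ℂ) *
          (E (single k i 1) x z * ρ k j * Fc (single x z 1) u v) := by
    intro x z
    rw [mul_add, add_mul, Finset.mul_sum, Finset.mul_sum, Finset.sum_mul, Finset.sum_mul,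
      ← Finset.sum_add_distrib]
    rw [← Finset.sum_add_distrib]
    refine Finset.sum_congr rfl fun k _ => ?_
    ring
  simp only [expand, Finset.sum_add_distrib]
  rw [swap3, swap3, mul_add, Finset.mul_sum, Finset.mul_sum]
  congr 1
  · refine Finset.sum_congr rfl fun k _ => ?_
    rw [← sum_lin hF (E (single j k 1)) u v]
    simp only [Finset.mul_sum]
    refine Finset.sum_congr rfl fun x _ => Finset.sum_congr rfl fun z _ => ?_
    ring
  · refine Finset.sum_congr rfl fun k _ => ?_
    rw [← sum_lin hF (E (single k i 1)) u v]
    simp only [Finset.sum_mul, Finset.mul_sum]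
    refine Finset.sum_congr rfl fun x _ => Finset.sum_congr rfl fun z _ => ?_
    ring
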